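/- Fix n ≥ 2 and let E_n = ⋃_{j∈[n]²} ∂B(x_j, 1/(2πn²)) with x_j = (k/(n+1), l/(n+1)) as above. Then for any α ∈ [2n⁻², 1) and any rectifiable curve Γ (compact connected set of finite H¹-measure) with H¹(Γ ∩ E_n) ≥ α, we have H¹(Γ) ≥ αn/128. -/

import Mathlib

open MeasureTheory Set Real
open scoped ENNReal NNReal

noncomputable section

abbrev Plane := EuclideanSpace ℝ (Fin 2)

def mk2 (a b : ℝ) : Plane := (WithLp.equiv 2 (Fin 2 → ℝ)).symm ![a, b]

/-- Orthogonal projection onto direction (cos θ, sin θ). -/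
def proj (θ : ℝ) (x : Plane) : ℝ := x 0 * Real.cos θ + x 1 * Real.sin θ

/-- Favard length. -/
def Fav (E : Set Plane) : ℝ≥0∞ := ∫⁻ θ in Set.Ioo 0 Real.pi, μH[1] (proj θ '' E)

/-- Grid points x_j, j ∈ [n]². -/
def gridPt (n : ℕ) (j : Fin n × Fin n) : Plane :=
  mk2 (((j.1 : ℝ) + 1) / (n + 1)) (((j.2 : ℝ) + 1) / (n + 1))

/-- The circles S_j of radius 1/(2πn²). -/
def gridCircle (n : ℕ) (j : Fin n × Fin n) : Set Plane :=
  Metric.sphere (gridPt n j) (1 / (2 * Real.pi * n ^ 2))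

/-- The closed discs B_j. -/
def gridBall (n : ℕ) (j : Fin n × Fin n) : Set Plane :=
  Metric.closedBall (gridPt n j) (1 / (2 * Real.pi * n ^ 2))

/-- E_n: union of the n² circles. -/
def gridSet (n : ℕ) : Set Plane := ⋃ j, gridCircle n j

/-!
A circle of radius `1/(2πn²)` has length at most `n⁻²`, so `Γ` meets at least `αn² ≥ 2` of
the circles of `E_n`. Points on distinct circles are `1/(2n)` apart, since the centres are
`1/(n+1)` apart. A connected set through such a point that also reaches another one has length
at least `1/(4n)` inside the ball of radius `1/(4n)` around it (the distance to the point maps it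
onto an interval), and these balls are disjoint; hence `H¹(Γ) ≥ αn² / (4n) = αn/4`.
-/

namespace Complex

theorem hausdorffMeasure_sphere_le (c : ℂ) (r : ℝ) :
    μH[1] (Metric.sphere c r) ≤ ENNReal.ofReal (2 * π * r) := by
  rcases lt_or_ge r 0 with hr | hr
  · simp [Metric.sphere_eq_empty_of_neg hr]
  calc μH[1] (Metric.sphere c r) = μH[1] (circleMap c r '' Ioc 0 (2 * π)) := by
        rw [image_circleMap_Ioc, abs_of_nonneg hr]
    _ ≤ (Real.nnabs r : ℝ≥0∞) ^ (1 : ℝ) * μH[1] (Ioc 0 (2 * π)) :=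
        (lipschitzWith_circleMap c r).hausdorffMeasure_image_le zero_le_one _
    _ = ENNReal.ofReal (2 * π * r) := by
        rw [ENNReal.rpow_one, hausdorffMeasure_real, Real.volume_Ioc, sub_zero, mul_comm,
          Real.nnabs_of_nonneg hr]
        exact (ENNReal.ofReal_mul (by positivity)).symm

end Complex

theorem Plane.hausdorffMeasure_sphere_le (c : Plane) (r : ℝ) :
    μH[1] (Metric.sphere c r) ≤ ENNReal.ofReal (2 * π * r) := by
  let e : ℂ ≃ᵢ Plane := Complex.orthonormalBasisOneI.repr.toIsometryEquiv
  rw [← e.apply_symm_apply c, ← e.image_sphere, e.hausdorffMeasure_image]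
  exact Complex.hausdorffMeasure_sphere_le _ _

section Measure

variable {α ι : Type*} [MeasurableSpace α] (μ : Measure α) (Γ : Set α)

theorem measure_inter_iUnion_le_card_mul {A : ι → Set α} {s : Finset ι} {c : ℝ≥0∞}
    (hA : ∀ i ∈ s, μ (A i) ≤ c) (hs : ∀ i ∉ s, Disjoint Γ (A i)) :
    μ (Γ ∩ ⋃ i, A i) ≤ s.card * c := by
  have hsub : Γ ∩ ⋃ i, A i ⊆ ⋃ i ∈ s, A i := by
    rintro x ⟨hxΓ, hxA⟩
    obtain ⟨i, hi⟩ := mem_iUnion.mp hxA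
    by_cases his : i ∈ s
    · exact mem_biUnion his hi
    · exact absurd hi (Set.disjoint_left.mp (hs i his) hxΓ)
  calc μ (Γ ∩ ⋃ i, A i) ≤ ∑ i ∈ s, μ (A i) :=
        (measure_mono hsub).trans (measure_biUnion_finset_le _ _)
    _ ≤ s.card • c := Finset.sum_le_card_nsmul _ _ _ hA
    _ = s.card * c := nsmul_eq_mul _ _

theorem sum_measure_inter_le {B : ι → Set α} {s : Finset ι}
    (hB : ∀ i ∈ s, MeasurableSet (B i)) (hd : (s : Set ι).PairwiseDisjoint B) :
    ∑ i ∈ s, μ (Γ ∩ B i) ≤ μ Γ := by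
  set T := toMeasurable μ Γ
  calc ∑ i ∈ s, μ (Γ ∩ B i) ≤ ∑ i ∈ s, μ (T ∩ B i) :=
        Finset.sum_le_sum fun i _ =>
          measure_mono (inter_subset_inter_left _ (subset_toMeasurable μ Γ))
    _ = μ (⋃ i ∈ s, T ∩ B i) :=
        (measure_biUnion_finset (hd.mono fun i => inter_subset_right)
          fun i hi => (measurableSet_toMeasurable μ Γ).inter (hB i hi)).symm
    _ ≤ μ T := measure_mono (iUnion₂_subset fun _ _ => inter_subset_left)
    _ = μ Γ := measure_toMeasurable Γ

end Measure

section Metric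

variable {X : Type*} [MetricSpace X] [MeasurableSpace X] [BorelSpace X] {Γ : Set X}

theorem IsPreconnected.ofReal_le_hausdorffMeasure_inter_ball (hΓ : IsPreconnected Γ) {x y : X}
    (hx : x ∈ Γ) (hy : y ∈ Γ) {e : ℝ} (he : e ≤ dist x y) :
    ENNReal.ofReal e ≤ μH[1] (Γ ∩ Metric.ball x e) := by
  have hIcc : Icc 0 (dist x y) ⊆ dist x '' Γ :=
    (hΓ.image _ (continuous_const.dist continuous_id).continuousOn).Icc_subset
      ⟨x, hx, dist_self x⟩ ⟨y, hy, rfl⟩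
  have hsub : Ico 0 e ⊆ dist x '' (Γ ∩ Metric.ball x e) := by
    rintro t ⟨ht0, hte⟩
    obtain ⟨z, hz, rfl⟩ := hIcc ⟨ht0, hte.le.trans he⟩
    exact ⟨z, ⟨hz, by rwa [Metric.mem_ball, dist_comm]⟩, rfl⟩
  calc ENNReal.ofReal e = μH[1] (Ico 0 e) := by
        rw [hausdorffMeasure_real, Real.volume_Ico, sub_zero]
    _ ≤ μH[1] (dist x '' (Γ ∩ Metric.ball x e)) := measure_mono hsub
    _ ≤ μH[1] (Γ ∩ Metric.ball x e) := by
        simpa using (LipschitzWith.dist_right x).hausdorffMeasure_image_le zero_le_one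
          (Γ ∩ Metric.ball x e)

theorem IsPreconnected.card_mul_le_hausdorffMeasure (hΓ : IsPreconnected Γ) {ι : Type*}
    {s : Finset ι} (hs : 1 < s.card) {p : ι → X} (hp : ∀ i ∈ s, p i ∈ Γ) {e : ℝ}
    (hsep : ∀ i ∈ s, ∀ j ∈ s, i ≠ j → 2 * e ≤ dist (p i) (p j)) :
    s.card * ENNReal.ofReal e ≤ μH[1] Γ := by
  have hball : ∀ i ∈ s, ENNReal.ofReal e ≤ μH[1] (Γ ∩ Metric.ball (p i) e) := by
    intro i hi
    obtain ⟨j, hj, hji⟩ := Finset.exists_mem_ne hs i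
    refine hΓ.ofReal_le_hausdorffMeasure_inter_ball (hp i hi) (hp j hj) ?_
    linarith [hsep i hi j hj hji.symm, dist_nonneg (x := p i) (y := p j)]
  have hdisj : (s : Set ι).PairwiseDisjoint fun i => Metric.ball (p i) e := by
    intro i hi j hj hij
    exact Metric.ball_disjoint_ball (by linarith [hsep i hi j hj hij])
  calc s.card * ENNReal.ofReal e = ∑ _i ∈ s, ENNReal.ofReal e := by
        rw [Finset.sum_const, nsmul_eq_mul]
    _ ≤ ∑ i ∈ s, μH[1] (Γ ∩ Metric.ball (p i) e) := Finset.sum_le_sum hball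
    _ ≤ μH[1] Γ := sum_measure_inter_le _ _ (fun _ _ => Metric.isOpen_ball.measurableSet) hdisj

end Metric

theorem hausdorffMeasure_gridCircle_le (n : ℕ) (j : Fin n × Fin n) :
    μH[1] (gridCircle n j) ≤ ENNReal.ofReal (1 / n ^ 2) := by
  refine (Plane.hausdorffMeasure_sphere_le _ _).trans_eq ?_
  congr 1
  rcases eq_or_ne (n : ℝ) 0 with hn | hn
  · simp [hn]
  · field_simp

theorem one_div_le_dist_gridPt (n : ℕ) {j k : Fin n × Fin n} (hjk : j ≠ k) :
    1 / ((n : ℝ) + 1) ≤ dist (gridPt n j) (gridPt n k) := by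
  have hcoord : ∀ a b : Fin n, a ≠ b →
      1 / ((n : ℝ) + 1) ≤ dist (((a : ℝ) + 1) / (n + 1)) (((b : ℝ) + 1) / (n + 1)) := by
    intro a b hab
    have hab' : (1 : ℝ) ≤ |(a : ℝ) - b| := Nat.pairwise_one_le_dist (Fin.val_ne_of_ne hab)
    rw [Real.dist_eq, ← sub_div, add_sub_add_right_eq_sub, abs_div,
      abs_of_pos (show (0 : ℝ) < n + 1 by positivity)]
    gcongr
  by_cases h1 : j.1 = k.1
  · have h2 : j.2 ≠ k.2 := fun h2 => hjk (Prod.ext h1 h2)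
    simpa [gridPt, mk2] using
      (hcoord _ _ h2).trans (PiLp.dist_apply_le (gridPt n j) (gridPt n k) 1)
  · simpa [gridPt, mk2] using
      (hcoord _ _ h1).trans (PiLp.dist_apply_le (gridPt n j) (gridPt n k) 0)

theorem one_div_two_mul_le_dist_of_mem_gridCircle {n : ℕ} (hn : 2 ≤ n) {j k : Fin n × Fin n}
    (hjk : j ≠ k) {x y : Plane} (hx : x ∈ gridCircle n j) (hy : y ∈ gridCircle n k) :
    1 / (2 * (n : ℝ)) ≤ dist x y := by
  have hn' : (2 : ℝ) ≤ n := by exact_mod_cast hn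
  set r := 1 / (2 * π * (n : ℝ) ^ 2)
  have hr : 2 * r ≤ 1 / (3 * (n : ℝ) ^ 2) := by
    rw [show 2 * r = 1 / (π * (n : ℝ) ^ 2) by simp only [r]; field_simp]
    gcongr
    exact pi_gt_three.le
  have hgap : 1 / (2 * (n : ℝ)) + 1 / (3 * (n : ℝ) ^ 2) ≤ 1 / ((n : ℝ) + 1) := by
    rw [div_add_div _ _ (by positivity) (by positivity),
      div_le_div_iff₀ (by positivity) (by positivity)]
    nlinarith
  have htri : dist (gridPt n j) (gridPt n k) ≤ r + dist x y + r := by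
    calc dist (gridPt n j) (gridPt n k) ≤ dist (gridPt n j) x + dist x y + dist y (gridPt n k) :=
          dist_triangle4 _ _ _ _
      _ = r + dist x y + r := by
          rw [dist_comm, Metric.mem_sphere.mp hx, Metric.mem_sphere.mp hy]
  linarith [one_div_le_dist_gridPt n hjk]

theorem stmt16_general (n : ℕ) (hn : 2 ≤ n) (α : ℝ) (hα : α ∈ Set.Ico (2 / (n : ℝ) ^ 2) 1)
    (Γ : Set Plane) (hconn : IsConnected Γ)
    (hint : ENNReal.ofReal α ≤ μH[1] (Γ ∩ gridSet n)) :
    ENNReal.ofReal (α * n / 128) ≤ μH[1] Γ := by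
  classical
  set S := Finset.univ.filter fun j => (Γ ∩ gridCircle n j).Nonempty
  have hcard : α * n ^ 2 ≤ S.card := by
    have h := hint.trans <| measure_inter_iUnion_le_card_mul μH[1] Γ (s := S)
      (fun j _ => hausdorffMeasure_gridCircle_le n j)
      fun j hj => disjoint_iff_inter_eq_empty.mpr
        (not_nonempty_iff_eq_empty.mp (by simpa [S] using hj))
    rwa [← ENNReal.ofReal_natCast, ← ENNReal.ofReal_mul (by positivity),
      ENNReal.ofReal_le_ofReal_iff (by positivity), mul_one_div, le_div_iff₀ (by positivity)] at h
  have hcard2 : 1 < S.card := by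
    have h2 : 2 ≤ α * n ^ 2 := (div_le_iff₀ (by positivity)).mp hα.1
    exact_mod_cast one_lt_two.trans_le (h2.trans hcard)
  choose! p hpΓ hpC using fun j (hj : j ∈ S) => (Finset.mem_filter.mp hj).2
  have hlen := hconn.isPreconnected.card_mul_le_hausdorffMeasure hcard2 hpΓ (e := 1 / (4 * n))
    fun i hi j hj hij => by
      rw [show 2 * (1 / (4 * (n : ℝ))) = 1 / (2 * n) by ring]
      exact one_div_two_mul_le_dist_of_mem_gridCircle hn hij (hpC i hi) (hpC j hj)
  refine le_trans ?_ hlen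
  rw [← ENNReal.ofReal_natCast, ← ENNReal.ofReal_mul (by positivity)]
  refine ENNReal.ofReal_le_ofReal ?_
  rw [mul_one_div, le_div_iff₀ (by positivity)]
  nlinarith

/-- A curve meeting the grid set in length α has length ≥ αn/128. -/
theorem stmt16 (n : ℕ) (hn : 2 ≤ n) (α : ℝ) (hα : α ∈ Set.Ico (2 / (n : ℝ) ^ 2) 1)
    (Γ : Set Plane) (hc : IsCompact Γ) (hconn : IsConnected Γ) (hfin : μH[1] Γ < ⊤)
    (hint : ENNReal.ofReal α ≤ μH[1] (Γ ∩ gridSet n)) :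
    ENNReal.ofReal (α * n / 128) ≤ μH[1] Γ :=
  stmt16_general n hn α hα Γ hconn hint
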